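/- arXiv:1204.0713 — 2 statements merged into one kernel-verified Lean document; each statement's English description precedes it below -/
import Mathlib

section
/- For all Laurent polynomials a, b, c ∈ ℂ[t,t⁻¹], the following super-bracket identity holds in the matrix realization of the Cheng–Kac superalgebra: {[e_{w₄−w₁}(a), [q_{w₁+w₄}, e_{w₃−w₄}(c)]], [q_{w₁+w₄}, e_{w₂−w₄}(b)]} = Vir(abc) − h_{w₁−w₄}(a·b'·c). Here the two inner brackets [q_{w₁+w₄}, e_{w₃−w₄}(c)] and [q_{w₁+w₄}, e_{w₂−w₄}(b)] are commutators, the bracket of e_{w₄−w₁}(a) with the (odd) element [q_{w₁+w₄}, e_{w₃−w₄}(c)] is a commutator, and the outermost bracket of the two resulting odd elements is an anticommutator. (This is Lemma 3.4 of the paper, with signs fixed by the stated conventions.) -/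
/-!
The bracket of the block off-diagonal `q_{w₁+w₄}` with a block diagonal `e_{w_i−w₄}(·)` is
again block off-diagonal, and so is its bracket with `e_{w₄−w₁}(a)`; all blocks are combinations
of matrix units. Hence the anticommutator of the two odd elements is block diagonal, and in fact
diagonal, with entries products of `m_a, m_b, m_c` and one `D`. Moving `D` to the right with the
Leibniz rule `D m_y = m_y D + m_{y'}` turns each entry into the corresponding entry
`m_{abc} D + m_z` of `Vir(abc) − h_{w₁−w₄}(ab'c)`.
-/

open LaurentPolynomial Matrix

noncomputable section

/-- `R = ℂ[t,t⁻¹]`, the algebra of complex Laurent polynomials. -/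
abbrev R := LaurentPolynomial ℂ

/-- Differentiation on Laurent polynomials, as a `ℂ`-linear endomorphism:
`D (T n) = n • T (n-1)`, i.e. `D f = f'`. -/
noncomputable def Der : Module.End ℂ R :=
  (Finsupp.lsum ℂ fun n : ℤ =>
    LinearMap.toSpanSingleton ℂ R ((n : ℂ) • LaurentPolynomial.T (n - 1)) :
      (ℤ →₀ ℂ) →ₗ[ℂ] R) ∘ₗ (AddMonoidAlgebra.coeffLinearEquiv ℂ).toLinearMap

/-- Multiplication by `a ∈ R` as a `ℂ`-linear endomorphism `m_a`. -/
noncomputable def mulE (a : R) : Module.End ℂ R := LinearMap.mulLeft ℂ a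

/-- The ring of operators `E = End_ℂ(R)`. -/
abbrev E := Module.End ℂ R

/-- 8×8 matrices over `E`, written as 2×2 blocks of 4×4 matrices. -/
abbrev M8 := Matrix (Fin 4 ⊕ Fin 4) (Fin 4 ⊕ Fin 4) E

/-- `b_{ij} = e_{ij} - e_{ji}` (entries are the identity operator); indices 0-based. -/
noncomputable def bMat (i j : Fin 4) : Matrix (Fin 4) (Fin 4) E :=
  Matrix.single i j 1 - Matrix.single j i 1

/-- `e_{w_i - w_j}(a) = [[e_{ij} m_a, 0],[0, -e_{ji} m_a]]`; indices 0-based. -/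
noncomputable def eW (i j : Fin 4) (a : R) : M8 :=
  Matrix.fromBlocks (Matrix.single i j (mulE a)) 0 0
    (-(Matrix.single j i (mulE a)))

/-- `h_{w_i - w_j}(a) = [[(e_{ii}-e_{jj}) m_a, 0],[0, (e_{jj}-e_{ii}) m_a]]`; indices 0-based. -/
noncomputable def hW (i j : Fin 4) (a : R) : M8 :=
  Matrix.fromBlocks
    (Matrix.single i i (mulE a) - Matrix.single j j (mulE a)) 0 0
    (Matrix.single j j (mulE a) - Matrix.single i i (mulE a))

/-- `φ` on the basis `b_{ij}` (`i < j`) of skew matrices (0-based indices):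
`φ(b₁₂) = b₃₄`, `φ(b₁₃) = -b₂₄`, `φ(b₁₄) = b₂₃`, `φ(b₂₃) = b₁₄`, `φ(b₂₄) = -b₁₃`,
`φ(b₃₄) = b₁₂` (the involution `k = k' + k'' ↦ k' - k''`). -/
noncomputable def phiB (i j : Fin 4) : Matrix (Fin 4) (Fin 4) E :=
  if i = 0 ∧ j = 1 then bMat 2 3
  else if i = 0 ∧ j = 2 then -(bMat 1 3)
  else if i = 0 ∧ j = 3 then bMat 1 2
  else if i = 1 ∧ j = 2 then bMat 0 3
  else if i = 1 ∧ j = 3 then -(bMat 0 2)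
  else if i = 2 ∧ j = 3 then bMat 0 1
  else 0

/-- `q_{w_i + w_j} = [[0, b_{ij}],[φ(b_{ij})D, 0]]` for `i < j`; indices 0-based. -/
noncomputable def qP (i j : Fin 4) : M8 :=
  Matrix.fromBlocks 0 (bMat i j) (phiB i j * Matrix.scalar (Fin 4) Der) 0

/-- `q_{-w_i - w_j}(a) = [[0,0],[(e_{ij}+e_{ji}) m_a, 0]]`; indices 0-based. -/
noncomputable def qM (i j : Fin 4) (a : R) : M8 :=
  Matrix.fromBlocks 0 0
    (Matrix.single i j (mulE a) + Matrix.single j i (mulE a)) 0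

/-- `Vir(a) = [[I₄ m_a D + e₁₁ m_{a'}, 0],[0, I₄ m_a D + (I₄ - e₁₁) m_{a'}]]`. -/
noncomputable def Vir (a : R) : M8 :=
  Matrix.fromBlocks
    (Matrix.scalar (Fin 4) (mulE a * Der) + Matrix.single 0 0 (mulE (Der a))) 0 0
    (Matrix.scalar (Fin 4) (mulE a * Der) +
      (Matrix.scalar (Fin 4) (mulE (Der a)) - Matrix.single 0 0 (mulE (Der a))))

theorem fromBlocks_sub_fromBlocks {l m n o α : Type*} [Sub α] (A A' : Matrix n l α)
    (B B' : Matrix n m α) (C C' : Matrix o l α) (D D' : Matrix o m α) :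
    fromBlocks A B C D - fromBlocks A' B' C' D' =
      fromBlocks (A - A') (B - B') (C - C') (D - D') := by
  ext (i | i) (j | j) <;> rfl

section BlockCommutators

variable {n o α : Type*} [Fintype n] [Fintype o] [Ring α]

theorem fromBlocks_offDiag_mul_sub_mul_diag (P : Matrix n o α) (Q : Matrix o n α)
    (A : Matrix n n α) (B : Matrix o o α) :
    fromBlocks 0 P Q 0 * fromBlocks A 0 0 B - fromBlocks A 0 0 B * fromBlocks 0 P Q 0 =
      fromBlocks 0 (P * B - A * P) (Q * A - B * Q) 0 := by
  simp only [fromBlocks_multiply, fromBlocks_sub_fromBlocks, Matrix.zero_mul, Matrix.mul_zero,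
    add_zero, zero_add, sub_self]

theorem fromBlocks_diag_mul_sub_mul_offDiag (A : Matrix n n α) (B : Matrix o o α)
    (P : Matrix n o α) (Q : Matrix o n α) :
    fromBlocks A 0 0 B * fromBlocks 0 P Q 0 - fromBlocks 0 P Q 0 * fromBlocks A 0 0 B =
      fromBlocks 0 (A * P - P * B) (B * Q - Q * A) 0 := by
  simp only [fromBlocks_multiply, fromBlocks_sub_fromBlocks, Matrix.zero_mul, Matrix.mul_zero,
    add_zero, zero_add, sub_self]

theorem fromBlocks_offDiag_mul_add_mul_offDiag (P P' : Matrix n o α) (Q Q' : Matrix o n α) :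
    fromBlocks 0 P Q 0 * fromBlocks 0 P' Q' 0 + fromBlocks 0 P' Q' 0 * fromBlocks 0 P Q 0 =
      fromBlocks (P * Q' + P' * Q) 0 0 (Q * P' + Q' * P) := by
  simp only [fromBlocks_multiply, fromBlocks_add, Matrix.zero_mul, Matrix.mul_zero, add_zero,
    zero_add]

end BlockCommutators

theorem Der_C_mul_T (r : ℂ) (n : ℤ) : Der (C r * T n) = (r * n) • T (n - 1) := by
  rw [← single_eq_C_mul_T]
  show Finsupp.lsum ℂ _ (Finsupp.single n r) = _
  rw [Finsupp.lsum_single, LinearMap.toSpanSingleton_apply, smul_smul]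

theorem Der_mul (x y : R) : Der (x * y) = Der x * y + x * Der y := by
  induction x using LaurentPolynomial.induction_on' with
  | add p q hp hq => simp only [add_mul, map_add, hp, hq]; ring
  | C_mul_T n r =>
    induction y using LaurentPolynomial.induction_on' with
    | add p q hp hq => simp only [mul_add, map_add, hp, hq]; ring
    | C_mul_T m s =>
      rw [mul_mul_mul_comm, ← map_mul, ← T_add, Der_C_mul_T, Der_C_mul_T, Der_C_mul_T]
      have h₁ : (T (n - 1) : R) * T m = T (n + m - 1) := by rw [← T_add]; ring_nf
      have h₂ : (T n : R) * T (m - 1) = T (n + m - 1) := by rw [← T_add]; ring_nf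
      simp only [smul_eq_C_mul, map_mul, map_intCast]
      push_cast
      linear_combination -(n * C r * C s) * h₁ - (m * C r * C s) * h₂

theorem qP03_eq_fromBlocks :
    qP 0 3 = fromBlocks 0 (single 0 3 1 - single 3 0 1) (single 1 2 Der - single 2 1 Der) 0 := by
  have hφ : phiB 0 3 = bMat 1 2 := by simp [phiB]
  simp only [qP, hφ, bMat, scalar_apply, ← op_smul_eq_mul_diagonal, smul_sub, smul_single,
    op_smul_eq_mul, one_mul]

theorem qP03_bracket_eW23 (c : R) :
    qP 0 3 * eW 2 3 c - eW 2 3 c * qP 0 3 =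
      fromBlocks 0 (single 2 0 (mulE c) - single 0 2 (mulE c))
        (single 1 3 (Der * mulE c) - single 3 1 (mulE c * Der)) 0 := by
  rw [qP03_eq_fromBlocks, eW, fromBlocks_offDiag_mul_sub_mul_diag]
  congr 1 <;> simp +decide [Matrix.sub_mul, Matrix.mul_sub,
    single_mul_single_same, single_mul_single_of_ne, neg_add_eq_sub]

theorem qP03_bracket_eW13 (b : R) :
    qP 0 3 * eW 1 3 b - eW 1 3 b * qP 0 3 =
      fromBlocks 0 (single 1 0 (mulE b) - single 0 1 (mulE b))
        (single 3 2 (mulE b * Der) - single 2 3 (Der * mulE b)) 0 := by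
  rw [qP03_eq_fromBlocks, eW, fromBlocks_offDiag_mul_sub_mul_diag]
  congr 1 <;> simp +decide [Matrix.sub_mul, Matrix.mul_sub,
    single_mul_single_same, single_mul_single_of_ne, neg_add_eq_sub]

theorem eW30_bracket_qP03_bracket_eW23 (a c : R) :
    eW 3 0 a * (qP 0 3 * eW 2 3 c - eW 2 3 c * qP 0 3)
        - (qP 0 3 * eW 2 3 c - eW 2 3 c * qP 0 3) * eW 3 0 a =
      fromBlocks 0 (single 2 3 (mulE c * mulE a) - single 3 2 (mulE a * mulE c))
        (single 0 1 (mulE a * (mulE c * Der)) - single 1 0 (Der * mulE c * mulE a)) 0 := by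
  rw [qP03_bracket_eW23, eW, fromBlocks_diag_mul_sub_mul_offDiag]
  congr 1 <;> simp +decide [Matrix.sub_mul, Matrix.mul_sub,
    single_mul_single_same, single_mul_single_of_ne, neg_add_eq_sub]

/-- Lemma 3.4:
`{[e_{w₄-w₁}(a), [q_{w₁+w₄}, e_{w₃-w₄}(c)]], [q_{w₁+w₄}, e_{w₂-w₄}(b)]}
  = Vir(abc) - h_{w₁-w₄}(a·b'·c)` (indices 0-based below). -/
theorem stmt4 (a b c : R) :
    (eW 3 0 a * (qP 0 3 * eW 2 3 c - eW 2 3 c * qP 0 3)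
        - (qP 0 3 * eW 2 3 c - eW 2 3 c * qP 0 3) * eW 3 0 a)
        * (qP 0 3 * eW 1 3 b - eW 1 3 b * qP 0 3)
      + (qP 0 3 * eW 1 3 b - eW 1 3 b * qP 0 3)
        * (eW 3 0 a * (qP 0 3 * eW 2 3 c - eW 2 3 c * qP 0 3)
            - (qP 0 3 * eW 2 3 c - eW 2 3 c * qP 0 3) * eW 3 0 a)
      = Vir (a * b * c) - hW 0 3 (a * Der b * c) := by
  rw [eW30_bracket_qP03_bracket_eW23, qP03_bracket_eW13, fromBlocks_offDiag_mul_add_mul_offDiag,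
    Vir, hW, fromBlocks_sub_fromBlocks, sub_self]
  congr 1 <;> refine Matrix.ext fun i j => ?_ <;> fin_cases i <;> fin_cases j <;>
    simp +decide only [Matrix.add_apply, Matrix.sub_apply, Matrix.mul_apply,
      Fin.sum_univ_four, single_apply, scalar_apply, diagonal_apply, mul_zero,
      zero_mul, add_zero, zero_add, sub_zero, zero_sub, true_and, and_true, if_true, if_false]
  all_goals
    -- the entries are first-order differential operators: compare them on a test function
    refine LinearMap.ext fun f => ?_
    simp only [LinearMap.add_apply, LinearMap.sub_apply, LinearMap.neg_apply, Module.End.mul_apply,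
      mulE, LinearMap.mulLeft_apply, map_neg, Der_mul]
    ring

end
end

section
/- For all Laurent polynomials a, b ∈ ℂ[t,t⁻¹], the following identity holds: {q_{w₁+w₂}, [{q_{w₁+w₃}, q_{−w₁−w₂}(a)}, q_{−w₁−w₃}(b)]} = h_{w₁−w₂}(ab), where the innermost bracket {q_{w₁+w₃}, q_{−w₁−w₂}(a)} is an anticommutator of two odd elements, the middle bracket with q_{−w₁−w₃}(b) is a commutator, and the outermost bracket with q_{w₁+w₂} is an anticommutator. (This is the key structure computation in the proof of Lemma 3.3 of the paper.) -/
/-! All three brackets are between an odd element `[[0, B], [C, 0]]` and an element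
supported in one block, so the lower-left block `φ(b)D` of `q_{w_i+w_j}` is always
multiplied by zero and differentiation never enters: the identity reduces to products of
matrix units, `{q_{w₁+w₃}, q_{-w₁-w₂}(a)} = [[-e₃₂ m_a, 0], [0, e₂₃ m_a]]`, whose
commutator with `q_{-w₁-w₃}(b)` is `q_{-w₁-w₂}(ab)`, and `{q_{w₁+w₂}, q_{-w₁-w₂}(c)} = h_{w₁-w₂}(c)`. -/

open LaurentPolynomial Matrix

noncomputable section

section Blocks

variable {n o α : Type*} [Fintype n] [Fintype o] [Ring α]

theorem fromBlocks_offDiag_anticomm_lower (B : Matrix n o α) (C X : Matrix o n α) :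
    fromBlocks 0 B C 0 * fromBlocks 0 0 X 0 + fromBlocks 0 0 X 0 * fromBlocks 0 B C 0 =
      fromBlocks (B * X) 0 0 (X * B) := by
  simp [fromBlocks_multiply, fromBlocks_add]

theorem fromBlocks_diag_comm_lower (P : Matrix n n α) (Q : Matrix o o α) (Y : Matrix o n α) :
    fromBlocks P 0 0 Q * fromBlocks 0 0 Y 0 - fromBlocks 0 0 Y 0 * fromBlocks P 0 0 Q =
      fromBlocks 0 0 (Q * Y - Y * P) 0 := by
  simp [fromBlocks_multiply, sub_eq_add_neg, fromBlocks_neg, fromBlocks_add]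

end Blocks

section MatrixUnits

variable {n α : Type*} [Fintype n] [DecidableEq n] [Ring α] {i j k : n}

theorem skew_mul_sym_of_ne (hij : i ≠ j) (hik : i ≠ k) (hjk : j ≠ k) (u : α) :
    (single i j 1 - single j i 1 : Matrix n n α) * (single i k u + single k i u) =
      -single j k u := by
  simp [mul_add, sub_mul, hik, hjk, hij.symm]

theorem sym_mul_skew_of_ne (hij : i ≠ j) (hik : i ≠ k) (hjk : j ≠ k) (u : α) :
    (single i k u + single k i u) * (single i j 1 - single j i 1 : Matrix n n α) =
      single k j u := by
  simp [add_mul, mul_sub, hij, hjk.symm, hik.symm]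

theorem skew_mul_sym_self (hij : i ≠ j) (u : α) :
    (single i j 1 - single j i 1 : Matrix n n α) * (single i j u + single j i u) =
      single i i u - single j j u := by
  simp [mul_add, sub_mul, hij, hij.symm]
  abel

theorem sym_mul_skew_self (hij : i ≠ j) (u : α) :
    (single i j u + single j i u) * (single i j 1 - single j i 1 : Matrix n n α) =
      single j j u - single i i u := by
  simp [add_mul, mul_sub, hij, hij.symm]

theorem single_mul_sym_sub_sym_mul_neg_single (hij : i ≠ j) (u v : α) :
    single k j u * (single i j v + single j i v) - (single i j v + single j i v) * -single j k u =
      single k i (u * v) + single i k (v * u) := by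
  simp [mul_add, add_mul, hij, hij.symm]

end MatrixUnits

theorem mulE_mul_mulE (a b : R) : mulE a * mulE b = mulE (a * b) :=
  (LinearMap.mulLeft_mul ℂ R a b).symm

theorem qP_anticomm_qM (i j k : Fin 4) (a : R) :
    qP i j * qM i k a + qM i k a * qP i j =
      fromBlocks (bMat i j * (single i k (mulE a) + single k i (mulE a))) 0 0
        ((single i k (mulE a) + single k i (mulE a)) * bMat i j) :=
  fromBlocks_offDiag_anticomm_lower _ _ _

theorem qP_anticomm_qM_of_ne {i j k : Fin 4} (hij : i ≠ j) (hik : i ≠ k) (hjk : j ≠ k) (a : R) :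
    qP i j * qM i k a + qM i k a * qP i j =
      fromBlocks (-single j k (mulE a)) 0 0 (single k j (mulE a)) := by
  rw [qP_anticomm_qM, bMat, skew_mul_sym_of_ne hij hik hjk, sym_mul_skew_of_ne hij hik hjk]

theorem qP_anticomm_qM_self {i j : Fin 4} (hij : i ≠ j) (a : R) :
    qP i j * qM i j a + qM i j a * qP i j = hW i j a := by
  rw [qP_anticomm_qM, bMat, skew_mul_sym_self hij, sym_mul_skew_self hij, hW]

theorem comm_qM_of_ne {i j k : Fin 4} (hij : i ≠ j) (a b : R) :
    fromBlocks (-single j k (mulE a)) 0 0 (single k j (mulE a)) * qM i j b -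
        qM i j b * fromBlocks (-single j k (mulE a)) 0 0 (single k j (mulE a)) =
      qM i k (a * b) := by
  rw [qM, fromBlocks_diag_comm_lower, single_mul_sym_sub_sym_mul_neg_single hij, mulE_mul_mulE,
    mulE_mul_mulE, mul_comm b, add_comm, qM]

theorem qP_anticomm_comm_anticomm {i j k : Fin 4} (hij : i ≠ j) (hik : i ≠ k) (hjk : j ≠ k)
    (a b : R) :
    qP i j * ((qP i k * qM i j a + qM i j a * qP i k) * qM i k b
        - qM i k b * (qP i k * qM i j a + qM i j a * qP i k))
      + ((qP i k * qM i j a + qM i j a * qP i k) * qM i k b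
        - qM i k b * (qP i k * qM i j a + qM i j a * qP i k)) * qP i j
      = hW i j (a * b) := by
  rw [qP_anticomm_qM_of_ne hik hij hjk.symm, comm_qM_of_ne hik, qP_anticomm_qM_self hij]

/-- `{q_{w₁+w₂}, [{q_{w₁+w₃}, q_{-w₁-w₂}(a)}, q_{-w₁-w₃}(b)]} = h_{w₁-w₂}(ab)`
(indices 0-based). -/
theorem stmt6 (a b : R) :
    qP 0 1 * ((qP 0 2 * qM 0 1 a + qM 0 1 a * qP 0 2) * qM 0 2 b
        - qM 0 2 b * (qP 0 2 * qM 0 1 a + qM 0 1 a * qP 0 2))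
      + ((qP 0 2 * qM 0 1 a + qM 0 1 a * qP 0 2) * qM 0 2 b
        - qM 0 2 b * (qP 0 2 * qM 0 1 a + qM 0 1 a * qP 0 2)) * qP 0 1
      = hW 0 1 (a * b) :=
  qP_anticomm_comm_anticomm (by decide) (by decide) (by decide) a b

end
end
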